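/- arXiv:1007.4031 — 2 statements merged into one kernel-verified Lean document; each statement's English description precedes it below -/
import Mathlib

section
/- In the type I almost complete graph (clique of size N-1 plus one peripheral vertex of degree α), the sum of local clustering coefficients, as a function of α on {1,...,N-1}, is symmetric about (N-1)/2: its value at α and at N-1-α coincide. -/
open SimpleGraph Finset

/-- Degree of a vertex (noncomputable, no decidability assumptions). -/
noncomputable def deg {V : Type*} [Fintype V] (G : SimpleGraph V) (u : V) : ℕ :=
  (G.neighborSet u).ncard

/-- Number of edges among the neighbors of `u` (as a rational, each edge counted once). -/
noncomputable def triC {V : Type*} [Fintype V] (G : SimpleGraph V) (u : V) : ℚ :=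
  ({p : V × V | G.Adj u p.1 ∧ G.Adj u p.2 ∧ G.Adj p.1 p.2}.ncard : ℚ) / 2

/-- Local clustering coefficient, with the convention that vertices of degree ≤ 1 have
clustering coefficient 1. -/
noncomputable def clust {V : Type*} [Fintype V] (G : SimpleGraph V) (u : V) : ℚ :=
  if deg G u ≤ 1 then 1 else triC G u / ((deg G u).choose 2)

/-- Sum of local clustering coefficients over all vertices. -/
noncomputable def totalClust {V : Type*} [Fintype V] (G : SimpleGraph V) : ℚ :=
  ∑ u, clust G u

/-- Number of edges of a graph. -/
noncomputable def edgeCount {V : Type*} [Fintype V] (G : SimpleGraph V) : ℕ :=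
  G.edgeSet.ncard

/-- Average distance of a (connected) graph: sum of pairwise shortest-path distances over
all unordered pairs of distinct vertices, divided by `N choose 2`.  (Ordered pairs are summed,
diagonal terms vanish, hence the factor 2.) -/
noncomputable def avgDist {V : Type*} [Fintype V] (G : SimpleGraph V) : ℚ :=
  (∑ u : V, ∑ v : V, (G.dist u v : ℚ)) / (2 * (Fintype.card V).choose 2)

/-- Type I almost complete graph: all vertices other than `p` form a clique, and the
peripheral vertex `p` is adjacent exactly to the vertices in `A`. -/
def acGraphI {V : Type*} [DecidableEq V] (p : V) (A : Finset V) : SimpleGraph V where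
  Adj u v := u ≠ v ∧ ((u ≠ p ∧ v ≠ p) ∨ (u = p ∧ v ∈ A) ∨ (v = p ∧ u ∈ A))
  symm := ⟨by intro u v h; exact ⟨h.1.symm, by tauto⟩⟩
  loopless := ⟨fun u h => h.1 rfl⟩

/-!
A vertex outside `A` (including `p`) has a clique as neighbourhood, so its clustering is `1`.
A vertex of `A` is adjacent to all `N - 1` other vertices, and the only non-adjacent pairs among
them join `p` to one of the `β = N - 1 - α` vertices outside `A ∪ {p}`; so its clustering is
`1 - β / C(N - 1, 2)`. Summing, the total clustering is `N - α β / C(N - 1, 2)`, which is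
symmetric in `α` and `β = N - 1 - α`.
-/

section Clustering

variable {V : Type*} [Fintype V] {G : SimpleGraph V} {u : V} {S : Finset V}

lemma deg_eq_card_of_neighborSet_eq (hS : G.neighborSet u = ↑S) : deg G u = #S := by
  rw [deg, hS, Set.ncard_coe_finset]

open Classical in
lemma triC_eq_of_neighborSet_eq (hS : G.neighborSet u = ↑S) :
    triC G u = (#{q ∈ S.offDiag | G.Adj q.1 q.2} : ℚ) / 2 := by
  have hpairs : {q : V × V | G.Adj u q.1 ∧ G.Adj u q.2 ∧ G.Adj q.1 q.2} =
      ↑{q ∈ S.offDiag | G.Adj q.1 q.2} := by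
    have hmem (v : V) : G.Adj u v ↔ v ∈ S := by rw [← mem_neighborSet, hS, mem_coe]
    ext q
    simp only [Set.mem_ofPred_eq, coe_filter, mem_offDiag, hmem]
    exact ⟨fun ⟨h1, h2, h12⟩ => ⟨⟨h1, h2, h12.ne⟩, h12⟩, fun ⟨⟨h1, h2, _⟩, h12⟩ => ⟨h1, h2, h12⟩⟩
  rw [triC, hpairs, Set.ncard_coe_finset]

open Classical in
/-- Each unordered pair of non-adjacent neighbours of `u` appears twice among the ordered pairs
counted here. For `#S ≤ 1` the right side is `1` only because `C(#S, 2) = 0` and `x / 0 = 0`. -/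
lemma clust_eq_one_sub_of_neighborSet_eq (hS : G.neighborSet u = ↑S) :
    clust G u = 1 - (#{q ∈ S.offDiag | ¬ G.Adj q.1 q.2} : ℚ) / 2 / ((#S).choose 2 : ℚ) := by
  rw [clust, deg_eq_card_of_neighborSet_eq hS]
  split_ifs with hdeg
  · rw [Nat.choose_eq_zero_of_lt (by omega), Nat.cast_zero, div_zero, sub_zero]
  · have hcount : (#{q ∈ S.offDiag | G.Adj q.1 q.2} : ℚ) + #{q ∈ S.offDiag | ¬ G.Adj q.1 q.2} =
        #S * (#S - 1) := by
      rw [← Nat.cast_add, card_filter_add_card_filter_not, offDiag_card,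
        Nat.cast_sub (Nat.le_mul_self _)]
      push_cast
      ring
    have hS1 : (#S : ℚ) - 1 ≠ 0 := by
      rw [sub_ne_zero]; exact_mod_cast (by omega : #S ≠ 1)
    have hS0 : (#S : ℚ) ≠ 0 := by exact_mod_cast (by omega : #S ≠ 0)
    rw [triC_eq_of_neighborSet_eq hS, Nat.cast_choose_two]
    field_simp
    linear_combination hcount

lemma clust_eq_one_of_isClique (hS : G.neighborSet u = ↑S) (hclique : G.IsClique (S : Set V)) :
    clust G u = 1 := by
  classical
  rw [clust_eq_one_sub_of_neighborSet_eq hS, filter_false_of_mem, card_empty]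
  · simp
  · simp only [mem_offDiag, not_not]
    exact fun q ⟨h1, h2, h12⟩ => hclique h1 h2 h12

end Clustering

lemma card_compl_insert_of_notMem {V : Type*} [Fintype V] [DecidableEq V] {p : V} {A : Finset V}
    (hpA : p ∉ A) : #(insert p A)ᶜ = Fintype.card V - 1 - #A := by
  rw [card_compl, card_insert_of_notMem hpA]
  omega

namespace acGraphI

variable {V : Type*} [DecidableEq V] {p : V} {A : Finset V}

lemma isClique_of_notMem {s : Finset V} (hps : p ∉ s) : (acGraphI p A).IsClique (s : Set V) :=
  fun _ hx _ hy hxy => ⟨hxy, .inl ⟨ne_of_mem_of_not_mem hx hps, ne_of_mem_of_not_mem hy hps⟩⟩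

lemma neighborSet_self (hpA : p ∉ A) : (acGraphI p A).neighborSet p = ↑A := by
  ext v
  simp only [mem_neighborSet, mem_coe]
  grind [acGraphI]

variable [Fintype V]

lemma neighborSet_of_mem (hpA : p ∉ A) {u : V} (hu : u ∈ A) :
    (acGraphI p A).neighborSet u = ↑(univ.erase u) := by
  ext v
  simp only [mem_neighborSet, mem_coe, mem_erase, mem_univ, and_true]
  grind [acGraphI]

lemma neighborSet_of_notMem {u : V} (hup : u ≠ p) (hu : u ∉ A) :
    (acGraphI p A).neighborSet u = ↑((univ.erase u).erase p) := by
  ext v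
  simp only [mem_neighborSet, mem_coe, mem_erase, mem_univ, and_true]
  grind [acGraphI]

open Classical in
lemma filter_not_adj_offDiag_of_mem (hpA : p ∉ A) {u : V} (hu : u ∈ A) :
    {q ∈ (univ.erase u).offDiag | ¬ (acGraphI p A).Adj q.1 q.2} =
      {p} ×ˢ (insert p A)ᶜ ∪ (insert p A)ᶜ ×ˢ {p} := by
  ext ⟨x, y⟩
  simp only [mem_filter, mem_offDiag, mem_erase, mem_univ, and_true, mem_union, mem_product,
    mem_singleton, mem_compl, mem_insert]
  grind [acGraphI]

open Classical in
lemma card_filter_not_adj_offDiag_of_mem (hpA : p ∉ A) {u : V} (hu : u ∈ A) :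
    #{q ∈ (univ.erase u).offDiag | ¬ (acGraphI p A).Adj q.1 q.2} = 2 * #(insert p A)ᶜ := by
  rw [filter_not_adj_offDiag_of_mem hpA hu, card_union_of_disjoint, card_product, card_product,
    card_singleton]
  · ring
  · exact disjoint_product.mpr (.inl (by simp))

lemma clust_eq (hpA : p ∉ A) (u : V) :
    clust (acGraphI p A) u =
      1 - if u ∈ A then (#(insert p A)ᶜ : ℚ) / ((Fintype.card V - 1).choose 2) else 0 := by
  by_cases hu : u ∈ A
  · rw [if_pos hu, clust_eq_one_sub_of_neighborSet_eq (neighborSet_of_mem hpA hu),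
      card_filter_not_adj_offDiag_of_mem hpA hu, card_erase_of_mem (mem_univ u), card_univ]
    push_cast
    ring
  rw [if_neg hu, sub_zero]
  by_cases hup : u = p
  · subst hup
    exact clust_eq_one_of_isClique (neighborSet_self hpA) (isClique_of_notMem hpA)
  · exact clust_eq_one_of_isClique (neighborSet_of_notMem hup hu) (isClique_of_notMem (by simp))

lemma totalClust_eq (hpA : p ∉ A) :
    totalClust (acGraphI p A) =
      Fintype.card V - #A * #(insert p A)ᶜ / ((Fintype.card V - 1).choose 2 : ℚ) := by
  simp only [totalClust, clust_eq hpA, sum_sub_distrib, sum_const, card_univ, nsmul_eq_mul,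
    mul_one, sum_ite_mem, univ_inter]
  ring

end acGraphI

theorem stmt9_general {V : Type*} [Fintype V] [DecidableEq V] (p : V) (A B : Finset V)
    (hpA : p ∉ A) (hpB : p ∉ B)
    (hsum : A.card + B.card = Fintype.card V - 1) :
    totalClust (acGraphI p A) = totalClust (acGraphI p B) := by
  have hA : #(insert p A)ᶜ = #B := by rw [card_compl_insert_of_notMem hpA]; omega
  have hB : #(insert p B)ᶜ = #A := by rw [card_compl_insert_of_notMem hpB]; omega
  rw [acGraphI.totalClust_eq hpA, acGraphI.totalClust_eq hpB, hA, hB, mul_comm]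

/-- The total clustering of the type I almost complete graph, as a function of the
peripheral degree `α`, is symmetric about `(N-1)/2`: its values at `α` and `N-1-α`
coincide. -/
theorem stmt9 {V : Type*} [Fintype V] [DecidableEq V] (p : V) (A B : Finset V)
    (hpA : p ∉ A) (hpB : p ∉ B) (h4 : 4 ≤ Fintype.card V)
    (hA : 1 ≤ A.card) (hB : 1 ≤ B.card)
    (hsum : A.card + B.card = Fintype.card V - 1) :
    totalClust (acGraphI p A) = totalClust (acGraphI p B) :=
  stmt9_general p A B hpA hpB hsum
end

section
/- For N ≥ 4, among all simple graphs with N vertices and binom(N-1,2)+1 ≤ m ≤ binom(N,2)-1 edges, the type I almost complete graph (clique on N-1 vertices plus one peripheral vertex of degree m - binom(N-1,2)) has strictly larger total clustering than any nonisomorphic graph of the same order and size. -/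
open SimpleGraph Finset

/-!
Let `N = |V|` and let `t` be the number of edges of the complement `Hᶜ`. A vertex of degree `d`
has clustering `1 - w / (d (d - 1))`, where `w` counts ordered pairs of non-adjacent neighbours,
so `totalClust H ≤ N - (∑ w) / ((N - 1) (N - 2))`; for the almost complete graph this is an
equality, with `∑ w = 2 t (N - 1 - t)`.

Counting `∑ w` over the ordered non-edges `(a, b)` of `H` gives `∑ |N(a) ∩ N(b)|`, and
`|N(a) ∩ N(b)| ≥ N + c(a, b) - d'(a) - d'(b)`, where `d'` and `c` are degrees and numbers of common
neighbours in `Hᶜ`. In a graph with `t` edges, `d'(a) + d'(b) ≤ t + 1` along every edge `ab`, and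
unless one vertex covers all edges, some edge even has `d'(a) + d'(b) ≤ t + c(a, b)`. Hence
`∑ w ≥ 2 t (N - 1 - t) + 2` unless `Hᶜ` is a star, i.e. unless `H` is an almost complete graph.
-/

namespace SimpleGraph

variable {V : Type*} [Fintype V] (G : SimpleGraph V) [DecidableRel G.Adj]

def openWedges (u : V) : Finset (V × V) :=
  (G.neighborFinset u).offDiag.filter fun q => ¬ G.Adj q.1 q.2

lemma two_le_degree_of_openWedges_nonempty {u : V} (h : (G.openWedges u).Nonempty) :
    2 ≤ G.degree u := by
  obtain ⟨q, hq⟩ := h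
  have : 0 < #(G.neighborFinset u).offDiag := card_pos.2 ⟨q, (mem_filter.1 hq).1⟩
  rw [offDiag_card, card_neighborFinset_eq_degree] at this
  by_contra! h
  interval_cases G.degree u <;> simp at this

lemma card_openWedges_div_le (u : V) :
    (#(G.openWedges u) : ℚ) / ((Fintype.card V - 1) * (Fintype.card V - 2)) ≤
      #(G.openWedges u) / ((G.degree u : ℚ) * (G.degree u - 1)) := by
  rcases (G.openWedges u).eq_empty_or_nonempty with h | h
  · simp [h]
  have h2 : (2 : ℚ) ≤ G.degree u := by exact_mod_cast G.two_le_degree_of_openWedges_nonempty h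
  have hN : (G.degree u : ℚ) + 1 ≤ Fintype.card V := by exact_mod_cast G.degree_lt_card_verts u
  apply div_le_div_of_nonneg_left (by positivity) (by nlinarith)
  nlinarith

variable [DecidableEq V]

lemma card_edgeFinset_add_card_edgeFinset_compl :
    #G.edgeFinset + #Gᶜ.edgeFinset = (Fintype.card V).choose 2 := by
  rw [← card_edgeFinset_top_eq_card_choose_two, ← card_union_of_disjoint]
  · congr 1
    rw [← coe_inj, coe_union, coe_edgeFinset, coe_edgeFinset, coe_edgeFinset, ← edgeSet_sup,
      sup_compl_eq_top]
  · rw [← disjoint_coe, coe_edgeFinset, coe_edgeFinset, disjoint_edgeSet]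
    exact disjoint_compl_right

lemma degree_eq_card_edgeFinset_of_forall_mem {q : V} (hq : ∀ e ∈ G.edgeSet, q ∈ e) :
    G.degree q = #G.edgeFinset := by
  rw [← card_incidenceFinset_eq_degree, incidenceFinset_eq_filter,
    filter_true_of_mem fun e he => hq e (mem_edgeFinset.1 he)]

lemma card_union_incidenceFinset_add_one {a b : V} (hab : G.Adj a b) :
    #(G.incidenceFinset a ∪ G.incidenceFinset b) + 1 = G.degree a + G.degree b := by
  have hinter : G.incidenceFinset a ∩ G.incidenceFinset b = {s(a, b)} := by
    simp [incidenceFinset, ← Set.toFinset_inter, G.incidenceSet_inter_incidenceSet_of_adj hab]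
  rw [← card_incidenceFinset_eq_degree, ← card_incidenceFinset_eq_degree,
    ← card_union_add_card_inter, hinter, card_singleton]

lemma degree_add_degree_le_card_edgeFinset_add_one {a b : V} (hab : G.Adj a b) :
    G.degree a + G.degree b ≤ #G.edgeFinset + 1 := by
  rw [← G.card_union_incidenceFinset_add_one hab]
  have := card_le_card <| union_subset (G.incidenceFinset_subset a) (G.incidenceFinset_subset b)
  omega

lemma degree_add_degree_le_card_edgeFinset {a b : V} (hab : G.Adj a b) {e : Sym2 V}
    (he : e ∈ G.edgeSet) (hae : a ∉ e) (hbe : b ∉ e) :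
    G.degree a + G.degree b ≤ #G.edgeFinset := by
  rw [← G.card_union_incidenceFinset_add_one hab]
  refine card_lt_card <| (ssubset_iff_of_subset <|
    union_subset (G.incidenceFinset_subset a) (G.incidenceFinset_subset b)).2
      ⟨e, mem_edgeFinset.2 he, ?_⟩
  simp [incidenceSet, hae, hbe]

lemma exists_adj_degree_add_degree_le [Nonempty V] (hG : ∀ v, ∃ e ∈ G.edgeSet, v ∉ e) :
    ∃ a b, G.Adj a b ∧
      G.degree a + G.degree b ≤ #G.edgeFinset + #(G.neighborFinset a ∩ G.neighborFinset b) := by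
  by_contra! h
  have hcov : ∀ a b, G.Adj a b → ∀ e ∈ G.edgeSet, a ∈ e ∨ b ∈ e := by
    intro a b hab e he
    by_contra! hn
    exact (h a b hab).not_ge <|
      le_add_right (G.degree_add_degree_le_card_edgeFinset hab he hn.1 hn.2)
  obtain ⟨e₀, he₀, -⟩ := hG (Classical.arbitrary V)
  induction e₀ using Sym2.ind with | h a b => ?_
  have hab : G.Adj a b := he₀
  obtain ⟨e₁, he₁, hae₁⟩ := hG a
  obtain ⟨e₂, he₂, hbe₂⟩ := hG b
  obtain ⟨c, rfl⟩ := Sym2.mem_iff_exists.1 ((hcov a b hab e₁ he₁).resolve_left hae₁)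
  obtain ⟨d, rfl⟩ := Sym2.mem_iff_exists.1 ((hcov a b hab e₂ he₂).resolve_right hbe₂)
  -- the edge `s(b, c)` must meet `s(a, d)`, which forces `c = d`
  have hcd : c = d := by
    have := hcov b c he₁ _ he₂
    simp only [Sym2.mem_iff] at this hae₁ hbe₂
    tauto
  subst hcd
  have : 0 < #(G.neighborFinset a ∩ G.neighborFinset b) :=
    card_pos.2 ⟨c, by simpa using ⟨he₂, he₁⟩⟩
  exact (h a b hab).not_ge (by linarith [G.degree_add_degree_le_card_edgeFinset_add_one hab])

-- The inequality holds termwise by `degree_add_degree_le_card_edgeFinset_add_one`, and strictly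
-- for both darts of the edge given by `exists_adj_degree_add_degree_le`.
lemma sum_dart_degree_add_two_le [Nonempty V] (hG : ∀ v, ∃ e ∈ G.edgeSet, v ∉ e) :
    ∑ d : G.Dart, (G.degree d.fst + G.degree d.snd) + 2 ≤
      ∑ d : G.Dart, (#G.edgeFinset + 1 + #(G.neighborFinset d.fst ∩ G.neighborFinset d.snd)) := by
  obtain ⟨a, b, hab, hle⟩ := G.exists_adj_degree_add_degree_le hG
  set d₀ : G.Dart := ⟨(a, b), hab⟩
  have hd₀ : d₀.symm ∈ univ.erase d₀ := mem_erase.2 ⟨d₀.symm_ne, mem_univ _⟩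
  have hle' : G.degree d₀.symm.fst + G.degree d₀.symm.snd ≤
      #G.edgeFinset + #(G.neighborFinset d₀.symm.fst ∩ G.neighborFinset d₀.symm.snd) := by
    rw [add_comm, inter_comm]; exact hle
  replace hle : G.degree d₀.fst + G.degree d₀.snd ≤
      #G.edgeFinset + #(G.neighborFinset d₀.fst ∩ G.neighborFinset d₀.snd) := hle
  have hrest := sum_le_sum (s := (univ.erase d₀).erase d₀.symm)
    (f := fun d : G.Dart => G.degree d.fst + G.degree d.snd)
    (g := fun d => #G.edgeFinset + 1 + #(G.neighborFinset d.fst ∩ G.neighborFinset d.snd))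
    fun d _ => by have := G.degree_add_degree_le_card_edgeFinset_add_one d.adj; omega
  rw [← add_sum_erase _ _ (mem_univ d₀), ← add_sum_erase _ _ (mem_univ d₀),
    ← add_sum_erase _ _ hd₀, ← add_sum_erase _ _ hd₀]
  omega

lemma sum_card_openWedges :
    ∑ u, #(G.openWedges u) =
      ∑ d : Gᶜ.Dart, #(G.neighborFinset d.fst ∩ G.neighborFinset d.snd) := by
  have hmem : ∀ u (q : V × V), q ∈ G.openWedges u ↔
      Gᶜ.Adj q.1 q.2 ∧ u ∈ G.neighborFinset q.1 ∩ G.neighborFinset q.2 := by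
    intro u q
    simp only [openWedges, mem_filter, mem_offDiag, mem_neighborFinset, mem_inter, compl_adj]
    constructor
    · rintro ⟨⟨h1, h2, hne⟩, hn⟩; exact ⟨⟨hne, hn⟩, h1.symm, h2.symm⟩
    · rintro ⟨⟨hne, hn⟩, h1, h2⟩; exact ⟨⟨h1.symm, h2.symm, hne⟩, hn⟩
  calc ∑ u, #(G.openWedges u)
      = ∑ u, ∑ q : V × V, if q ∈ G.openWedges u then 1 else 0 := by simp
    _ = ∑ q : V × V, ∑ u, if q ∈ G.openWedges u then 1 else 0 := sum_comm
    _ = ∑ q ∈ univ.filter fun q : V × V => Gᶜ.Adj q.1 q.2,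
          #(G.neighborFinset q.1 ∩ G.neighborFinset q.2) := by
      rw [sum_filter]
      refine sum_congr rfl fun q _ => ?_
      simp only [hmem]
      split_ifs with h
      · simp only [h, true_and, sum_boole, Nat.cast_id]
        congr 1; ext; simp
      · simp [h]
    _ = ∑ q ∈ univ.map ⟨Dart.toProd, Dart.toProd_injective⟩,
          #(G.neighborFinset q.1 ∩ G.neighborFinset q.2) := by
      congr 1
      ext ⟨a, b⟩
      simp only [mem_filter, mem_univ, true_and, mem_map, Function.Embedding.coeFn_mk]
      exact ⟨fun h => ⟨⟨(a, b), h⟩, rfl⟩, by rintro ⟨⟨_, h⟩, rfl⟩; exact h⟩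
    _ = ∑ d : Gᶜ.Dart, #(G.neighborFinset d.fst ∩ G.neighborFinset d.snd) := sum_map _ _ _

lemma card_add_card_inter_compl_le {a b : V} (hab : Gᶜ.Adj a b) :
    Fintype.card V + #(Gᶜ.neighborFinset a ∩ Gᶜ.neighborFinset b) ≤
      #(G.neighborFinset a ∩ G.neighborFinset b) + Gᶜ.degree a + Gᶜ.degree b := by
  set Ca := insert a (Gᶜ.neighborFinset a)
  set Cb := insert b (Gᶜ.neighborFinset b)
  have hcover : univ ⊆ (G.neighborFinset a ∩ G.neighborFinset b) ∪ (Ca ∪ Cb) := by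
    intro x _
    simp only [Ca, Cb, mem_union, mem_inter, mem_insert, mem_neighborFinset, compl_adj]
    grind
  have hcommon : insert a (insert b (Gᶜ.neighborFinset a ∩ Gᶜ.neighborFinset b)) ⊆ Ca ∩ Cb := by
    intro x
    simp only [Ca, Cb, mem_inter, mem_insert, mem_neighborFinset]
    grind [Adj.symm]
  have hcard : #(insert a (insert b (Gᶜ.neighborFinset a ∩ Gᶜ.neighborFinset b))) =
      #(Gᶜ.neighborFinset a ∩ Gᶜ.neighborFinset b) + 2 := by
    rw [card_insert_of_notMem (by simp [hab.ne]), card_insert_of_notMem (by simp)]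
  have hCa : #Ca = Gᶜ.degree a + 1 := by
    rw [card_insert_of_notMem (by simp), card_neighborFinset_eq_degree]
  have hCb : #Cb = Gᶜ.degree b + 1 := by
    rw [card_insert_of_notMem (by simp), card_neighborFinset_eq_degree]
  have := card_le_card hcover
  have := card_le_card hcommon
  have := card_union_le (G.neighborFinset a ∩ G.neighborFinset b) (Ca ∪ Cb)
  have := card_union_add_card_inter Ca Cb
  rw [card_univ] at *
  omega

lemma sum_card_openWedges_add_two_le [Nonempty V] (hG : ∀ v, ∃ e ∈ Gᶜ.edgeSet, v ∉ e) :
    2 * #Gᶜ.edgeFinset * Fintype.card V + 2 ≤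
      ∑ u, #(G.openWedges u) + 2 * #Gᶜ.edgeFinset * (#Gᶜ.edgeFinset + 1) := by
  have hcount := sum_le_sum (s := univ) fun (d : Gᶜ.Dart) _ =>
    G.card_add_card_inter_compl_le d.adj
  have hdeg := Gᶜ.sum_dart_degree_add_two_le hG
  simp only [sum_add_distrib, sum_const, card_univ, dart_card_eq_twice_card_edges,
    smul_eq_mul] at hcount hdeg
  rw [G.sum_card_openWedges]
  linarith

end SimpleGraph

section Clustering

variable {V : Type*} [Fintype V] (G : SimpleGraph V) [DecidableRel G.Adj]

lemma deg_eq_degree (u : V) : deg G u = G.degree u := by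
  rw [deg, ← card_neighborFinset_eq_degree, ← Set.ncard_coe_finset, coe_neighborFinset]

lemma edgeCount_eq_card_edgeFinset : edgeCount G = #G.edgeFinset := by
  rw [edgeCount, ← Set.ncard_coe_finset, coe_edgeFinset]

lemma triC_eq (u : V) :
    triC G u = ((G.degree u : ℚ) * (G.degree u - 1) - #(G.openWedges u)) / 2 := by
  have hset : {q : V × V | G.Adj u q.1 ∧ G.Adj u q.2 ∧ G.Adj q.1 q.2} =
      ↑((G.neighborFinset u).offDiag.filter fun q => G.Adj q.1 q.2) := by
    ext q
    simp only [Set.mem_ofPred, coe_filter, mem_offDiag, mem_neighborFinset]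
    exact ⟨fun h => ⟨⟨h.1, h.2.1, h.2.2.ne⟩, h.2.2⟩, fun h => ⟨h.1.1, h.1.2.1, h.2⟩⟩
  have hsplit := card_filter_add_card_filter_not
    (s := (G.neighborFinset u).offDiag) fun q => G.Adj q.1 q.2
  rw [offDiag_card, card_neighborFinset_eq_degree] at hsplit
  have hcast : ((G.degree u * G.degree u - G.degree u : ℕ) : ℚ)
      = (G.degree u : ℚ) * (G.degree u - 1) := by
    rw [Nat.cast_sub (Nat.le_mul_self _)]; push_cast; ring
  rw [triC, hset, Set.ncard_coe_finset, ← hcast, ← hsplit, openWedges]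
  push_cast
  ring

lemma clust_eq_one_sub (u : V) :
    clust G u = 1 - #(G.openWedges u) / ((G.degree u : ℚ) * (G.degree u - 1)) := by
  rw [clust, deg_eq_degree]
  split_ifs with h
  · -- here `d (d - 1) = 0`, and division by zero gives `0`
    interval_cases G.degree u <;> simp
  · have hd : (2 : ℚ) ≤ G.degree u := by exact_mod_cast not_le.1 h
    have hne : (G.degree u : ℚ) * (G.degree u - 1) ≠ 0 := by nlinarith
    rw [triC_eq, Nat.cast_choose_two, div_div_div_cancel_right₀ two_ne_zero, sub_div, div_self hne]

lemma totalClust_eq :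
    totalClust G = Fintype.card V -
      ∑ u, (#(G.openWedges u) : ℚ) / ((G.degree u : ℚ) * (G.degree u - 1)) := by
  simp [totalClust, clust_eq_one_sub, sum_sub_distrib]

lemma totalClust_le :
    totalClust G ≤ Fintype.card V -
      (∑ u, #(G.openWedges u) : ℚ) / ((Fintype.card V - 1) * (Fintype.card V - 2)) := by
  rw [totalClust_eq, sum_div]
  linarith [sum_le_sum fun u (_ : u ∈ univ) => G.card_openWedges_div_le u]

end Clustering

lemma Finset.exists_perm_apply_eq_and_mem_iff {V : Type*} [Fintype V] [DecidableEq V] {p q : V}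
    {A B : Finset V} (hp : p ∉ A) (hq : q ∉ B) (h : #B = #A) :
    ∃ σ : Equiv.Perm V, σ q = p ∧ ∀ x, σ x ∈ A ↔ x ∈ B := by
  set τ := (B.equivOfCardEq h).extendSubtype
  have hτ : ∀ x, τ x ∈ A ↔ x ∈ B := fun x =>
    ⟨fun hx => by_contra fun hx' => Equiv.extendSubtype_not_mem _ x hx' hx,
      Equiv.extendSubtype_mem _ x⟩
  refine ⟨τ.trans (Equiv.swap (τ q) p), by simp, fun x => ?_⟩
  have hτq : τ q ∉ A := (hτ q).not.2 hq
  rw [Equiv.trans_apply, ← hτ x, Equiv.swap_apply_def]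
  split_ifs with h₁ h₂ <;> simp_all

section AlmostComplete

variable {V : Type*} [DecidableEq V] {p : V} {A : Finset V}

lemma acGraphI_adj {u v : V} :
    (acGraphI p A).Adj u v ↔ u ≠ v ∧ (u = p → v ∈ A) ∧ (v = p → u ∈ A) := by
  simp only [acGraphI]
  grind

instance : DecidableRel (acGraphI p A).Adj := fun _ _ => decidable_of_iff _ acGraphI_adj.symm

variable [Fintype V]

lemma degree_acGraphI_of_mem (hp : p ∉ A) {u : V} (hu : u ∈ A) :
    (acGraphI p A).degree u = Fintype.card V - 1 := by
  have : (acGraphI p A).neighborFinset u = univ.erase u := by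
    ext v
    simp only [mem_neighborFinset, acGraphI_adj, mem_erase, mem_univ, and_true]
    grind
  rw [← card_neighborFinset_eq_degree, this, card_erase_of_mem (mem_univ u), card_univ]

lemma openWedges_acGraphI_of_notMem {u : V} (hu : u ∉ A) : (acGraphI p A).openWedges u = ∅ := by
  ext ⟨x, y⟩
  simp only [openWedges, mem_filter, mem_offDiag, mem_neighborFinset, acGraphI_adj,
    notMem_empty, iff_false]
  grind

lemma card_openWedges_acGraphI_of_mem (hp : p ∉ A) {u : V} (hu : u ∈ A) :
    #((acGraphI p A).openWedges u) = 2 * #(insert p A)ᶜ := by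
  have : (acGraphI p A).openWedges u = {p} ×ˢ (insert p A)ᶜ ∪ (insert p A)ᶜ ×ˢ {p} := by
    ext ⟨x, y⟩
    simp only [openWedges, mem_filter, mem_offDiag, mem_neighborFinset, acGraphI_adj, mem_union,
      mem_product, mem_singleton, mem_compl, mem_insert]
    grind
  have hdisj : Disjoint ({p} ×ˢ (insert p A)ᶜ) ((insert p A)ᶜ ×ˢ {p}) := by
    rw [Finset.disjoint_left]
    rintro ⟨x, y⟩ h h'
    simp only [mem_product, mem_singleton, mem_compl, mem_insert] at h h'
    exact h'.1 (Or.inl h.1)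
  rw [this, card_union_of_disjoint hdisj, card_product, card_product, card_singleton]
  ring

lemma totalClust_acGraphI (hp : p ∉ A) :
    totalClust (acGraphI p A) = Fintype.card V -
      2 * #A * (Fintype.card V - 1 - #A) / ((Fintype.card V - 1) * (Fintype.card V - 2)) := by
  have hcompl : (#(insert p A)ᶜ : ℚ) = Fintype.card V - 1 - #A := by
    have := card_le_univ (insert p A)
    rw [card_compl, card_insert_of_notMem hp] at *
    push_cast [Nat.cast_sub this]
    ring
  have hN : ((Fintype.card V - 1 : ℕ) : ℚ) = Fintype.card V - 1 := by
    rw [Nat.cast_sub (Fintype.card_pos_iff.2 ⟨p⟩), Nat.cast_one]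
  rw [totalClust_eq, ← sum_subset (subset_univ A) fun u _ hu => by
    simp [openWedges_acGraphI_of_notMem hu]]
  rw [sum_congr rfl fun u hu => by
    rw [card_openWedges_acGraphI_of_mem hp hu, degree_acGraphI_of_mem hp hu]]
  rw [sum_const, nsmul_eq_mul]
  push_cast
  rw [hcompl, hN]
  ring

lemma nonempty_iso_acGraphI {q : V} {B : Finset V} (hp : p ∉ A) (hq : q ∉ B) (h : #B = #A) :
    Nonempty (acGraphI q B ≃g acGraphI p A) := by
  obtain ⟨σ, hσq, hσ⟩ := Finset.exists_perm_apply_eq_and_mem_iff hp hq h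
  refine ⟨⟨σ, fun {u v} => ?_⟩⟩
  simp only [acGraphI_adj, hσ, ← hσq, ne_eq, EmbeddingLike.apply_eq_iff_eq]

lemma eq_acGraphI_of_forall_mem_compl (G : SimpleGraph V) [DecidableRel G.Adj] {q : V}
    (hq : ∀ e ∈ Gᶜ.edgeSet, q ∈ e) : G = acGraphI q (G.neighborFinset q) := by
  ext u v
  have := hq s(u, v)
  simp only [mem_edgeSet, compl_adj, Sym2.mem_iff] at this
  rw [acGraphI_adj, mem_neighborFinset, mem_neighborFinset]
  grind [Adj.symm, Adj.ne]

lemma nonempty_iso_acGraphI_of_forall_mem_compl (hp : p ∉ A) (G : SimpleGraph V)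
    [DecidableRel G.Adj] (hA : #A + #Gᶜ.edgeFinset = Fintype.card V - 1) {q : V}
    (hq : ∀ e ∈ Gᶜ.edgeSet, q ∈ e) : Nonempty (G ≃g acGraphI p A) := by
  have hdeg : #(G.neighborFinset q) = #A := by
    have := Gᶜ.degree_eq_card_edgeFinset_of_forall_mem hq
    have := G.degree_compl (v := q)
    have := G.degree_lt_card_verts q
    rw [card_neighborFinset_eq_degree]
    omega
  rw [eq_acGraphI_of_forall_mem_compl G hq]
  exact nonempty_iso_acGraphI hp (G.notMem_neighborFinset_self q) hdeg

end AlmostComplete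

theorem stmt12_general {V : Type*} [Fintype V] [DecidableEq V] (p : V) (A : Finset V)
    (hp : p ∉ A) (m : ℕ)
    (hm1 : (Fintype.card V - 1).choose 2 + 1 ≤ m)
    (hm2 : m ≤ (Fintype.card V).choose 2 - 1)
    (hA : A.card = m - (Fintype.card V - 1).choose 2)
    (H : SimpleGraph V) (hH : edgeCount H = m)
    (hiso : IsEmpty (H ≃g acGraphI p A)) :
    totalClust H < totalClust (acGraphI p A) := by
  classical
  have : Nonempty V := ⟨p⟩
  have hedges := H.card_edgeFinset_add_card_edgeFinset_compl
  rw [← edgeCount_eq_card_edgeFinset, hH] at hedges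
  set N := Fintype.card V
  set t := #Hᶜ.edgeFinset
  have hN : 1 ≤ N := Fintype.card_pos
  have hpascal : N.choose 2 = (N - 1).choose 1 + (N - 1).choose 2 := by
    simpa only [Nat.sub_add_cancel hN] using Nat.choose_succ_succ' (N - 1) 1
  rw [Nat.choose_one_right] at hpascal
  have hAt : #A + t = N - 1 := by omega
  have hnonstar : ∀ v, ∃ e ∈ Hᶜ.edgeSet, v ∉ e := by
    by_contra! ⟨q, hq⟩
    exact hiso.false (nonempty_iso_acGraphI_of_forall_mem_compl hp H hAt hq).some
  have hw : (2 * t * N + 2 : ℚ) ≤ ∑ u, (#(H.openWedges u) : ℚ) + 2 * t * (t + 1) := by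
    exact_mod_cast H.sum_card_openWedges_add_two_le hnonstar
  have hAtℚ : (#A : ℚ) = N - 1 - t := by
    rw [eq_sub_iff_add_eq, ← Nat.cast_add, hAt, Nat.cast_sub hN, Nat.cast_one]
  have ht : (1 : ℚ) ≤ t := by exact_mod_cast (show 1 ≤ t by omega)
  have hA₁ : (1 : ℚ) ≤ #A := by exact_mod_cast (show 1 ≤ #A by omega)
  have hD : (0 : ℚ) < (N - 1) * (N - 2) := by nlinarith
  rw [totalClust_acGraphI hp]
  calc totalClust H
      ≤ N - (∑ u, #(H.openWedges u) : ℚ) / ((N - 1) * (N - 2)) := totalClust_le H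
    _ < N - 2 * #A * (N - 1 - #A) / ((N - 1) * (N - 2)) := by
      gcongr
      rw [hAtℚ]
      nlinarith

/-- For `(N-1 choose 2)+1 ≤ m ≤ (N choose 2)-1`, the type I almost complete graph of
order `N` and size `m` has strictly larger total clustering than any nonisomorphic graph
of the same order and size. -/
theorem stmt12 {V : Type*} [Fintype V] [DecidableEq V] (p : V) (A : Finset V)
    (hp : p ∉ A) (h4 : 4 ≤ Fintype.card V) (m : ℕ)
    (hm1 : (Fintype.card V - 1).choose 2 + 1 ≤ m)
    (hm2 : m ≤ (Fintype.card V).choose 2 - 1)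
    (hA : A.card = m - (Fintype.card V - 1).choose 2)
    (H : SimpleGraph V) (hH : edgeCount H = m)
    (hiso : IsEmpty (H ≃g acGraphI p A)) :
    totalClust H < totalClust (acGraphI p A) :=
  stmt12_general p A hp m hm1 hm2 hA H hH hiso
end
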